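/- Let x₁, x₂ be in the closed unit ball of ℝ², λ ∈ [0,1], and c ∈ ℝ². Then there exists y in the closed unit ball of ℝ² such that ‖y‖²·c + y = (λ‖x₁‖² + (1−λ)‖x₂‖²)·c + λx₁ + (1−λ)x₂. -/

import Mathlib

/-!
Put `m = l x₁ + (1 - l) x₂` and `s = l ‖x₁‖² + (1 - l) ‖x₂‖²`; convexity of `‖·‖²` gives
`‖m‖² ≤ s ≤ 1`. Look for `y = m + t c` with `‖y‖² = s - t`: then `‖y‖² c + y = s c + m`.
The function `t ↦ ‖m + t c‖² + t - s` is `≤ 0` at `t = 0` and `≥ 0` at `t = s`, so the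
intermediate value theorem provides such a `t ∈ [0, s]`, and then `‖y‖² = s - t ≤ 1`.
-/

open Matrix Set

section

variable {ι : Type*} [Fintype ι]

theorem dotProduct_self_nonneg (v : ι → ℝ) : 0 ≤ v ⬝ᵥ v :=
  Finset.sum_nonneg fun i _ => mul_self_nonneg (v i)

theorem dotProduct_self_smul_add_smul_le (x₁ x₂ : ι → ℝ) {l : ℝ} (hl0 : 0 ≤ l) (hl1 : l ≤ 1) :
    (l • x₁ + (1 - l) • x₂) ⬝ᵥ (l • x₁ + (1 - l) • x₂) ≤
      l * (x₁ ⬝ᵥ x₁) + (1 - l) * (x₂ ⬝ᵥ x₂) := by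
  have hgap : l * (x₁ ⬝ᵥ x₁) + (1 - l) * (x₂ ⬝ᵥ x₂) -
      (l • x₁ + (1 - l) • x₂) ⬝ᵥ (l • x₁ + (1 - l) • x₂) =
        l * (1 - l) * ((x₁ - x₂) ⬝ᵥ (x₁ - x₂)) := by
    simp only [dotProduct_add, add_dotProduct, dotProduct_smul, smul_dotProduct,
      sub_dotProduct, dotProduct_sub, smul_eq_mul, dotProduct_comm x₂ x₁]
    ring
  have : 0 ≤ l * (1 - l) * ((x₁ - x₂) ⬝ᵥ (x₁ - x₂)) :=
    mul_nonneg (mul_nonneg hl0 (by linarith)) (dotProduct_self_nonneg _)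
  linarith

theorem exists_mem_Icc_dotProduct_self_add_smul_eq (m c : ι → ℝ) {s : ℝ} (hs : m ⬝ᵥ m ≤ s) :
    ∃ t ∈ Icc 0 s, (m + t • c) ⬝ᵥ (m + t • c) = s - t := by
  let f : ℝ → ℝ := fun t => (m + t • c) ⬝ᵥ (m + t • c) + t
  have hf : Continuous f := by
    refine Continuous.add (Continuous.dotProduct ?_ ?_) continuous_id <;> fun_prop
  have hs0 : 0 ≤ s := (dotProduct_self_nonneg m).trans hs
  have hmem : s ∈ Icc (f 0) (f s) :=
    ⟨by simpa [f] using hs, by simpa [f] using dotProduct_self_nonneg (m + s • c)⟩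
  obtain ⟨t, ht, hft⟩ := intermediate_value_Icc hs0 hf.continuousOn hmem
  exact ⟨t, ht, by simp only [f] at hft; linarith⟩

theorem exists_dotProduct_self_smul_add_eq (m c : ι → ℝ) {s : ℝ} (hs : m ⬝ᵥ m ≤ s) :
    ∃ y : ι → ℝ, y ⬝ᵥ y ≤ s ∧ (y ⬝ᵥ y) • c + y = s • c + m := by
  obtain ⟨t, ⟨ht0, -⟩, hy⟩ := exists_mem_Icc_dotProduct_self_add_smul_eq m c hs
  refine ⟨m + t • c, by linarith, ?_⟩
  rw [hy]
  module

end

theorem stmt4 (x₁ x₂ : Fin 2 → ℝ) (h1 : x₁ ⬝ᵥ x₁ ≤ 1) (h2 : x₂ ⬝ᵥ x₂ ≤ 1)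
    (l : ℝ) (hl0 : 0 ≤ l) (hl1 : l ≤ 1) (c : Fin 2 → ℝ) :
    ∃ y : Fin 2 → ℝ, y ⬝ᵥ y ≤ 1 ∧
      (y ⬝ᵥ y) • c + y =
        (l * (x₁ ⬝ᵥ x₁) + (1 - l) * (x₂ ⬝ᵥ x₂)) • c + (l • x₁ + (1 - l) • x₂) := by
  obtain ⟨y, hy, hyc⟩ :=
    exists_dotProduct_self_smul_add_eq _ c (dotProduct_self_smul_add_smul_le x₁ x₂ hl0 hl1)
  have hs : l * (x₁ ⬝ᵥ x₁) + (1 - l) * (x₂ ⬝ᵥ x₂) ≤ 1 := by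
    linarith [mul_le_mul_of_nonneg_left h1 hl0, mul_le_mul_of_nonneg_left h2 (sub_nonneg.2 hl1)]
  exact ⟨y, hy.trans hs, hyc⟩
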